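/- For every three-element set S of pairwise noncrossing interior edges of K6, there is at most one interior edge of K6 that crosses all three edges of S. -/

import Mathlib

/-- The cyclic length of the chord joining vertices `a` and `b` of `K₆`,
whose vertices are labeled by `ZMod 6` in cyclic order around a circle. -/
def cycLen (a b : ZMod 6) : ℕ := min (b - a).val (a - b).val

/-- An interior edge of `K₆`: a 2-element set of vertices at cyclic distance at least 2. -/
def InteriorEdge (e : Finset (ZMod 6)) : Prop :=
  e.card = 2 ∧ ∀ a ∈ e, ∀ b ∈ e, a ≠ b → 2 ≤ cycLen a b

/-- A short edge of `K₆`: a 2-element set of vertices at cyclic distance exactly 2. -/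
def ShortEdge (e : Finset (ZMod 6)) : Prop :=
  e.card = 2 ∧ ∀ a ∈ e, ∀ b ∈ e, a ≠ b → cycLen a b = 2

/-- A long edge of `K₆`: a 2-element set of vertices at cyclic distance exactly 3. -/
def LongEdge (e : Finset (ZMod 6)) : Prop :=
  e.card = 2 ∧ ∀ a ∈ e, ∀ b ∈ e, a ≠ b → cycLen a b = 3

/-- `x` lies in the open cyclic arc from `a` to `b` (in the cyclic order of labels). -/
def InArc (a b x : ZMod 6) : Prop := 0 < (x - a).val ∧ (x - a).val < (b - a).val

/-- Two chords `{a,b}` and `{c,d}` cross iff their endpoint sets are disjoint and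
exactly one of `c`, `d` lies in the open cyclic arc from `a` to `b`. -/
def Crosses (e f : Finset (ZMod 6)) : Prop :=
  Disjoint e f ∧ ∃ a b c d : ZMod 6, a ≠ b ∧ c ≠ d ∧ e = {a, b} ∧ f = {c, d} ∧
    Xor' (InArc a b c) (InArc a b d)

/-!
Three pairwise noncrossing diagonals of a hexagon form a triangulation of it (a fan, a zigzag or
the inner triangle), and for each of these at most one diagonal crosses all three. With the nine
interior edges listed explicitly this is a finite check.
-/

theorem Finset.eq_pair_of_card_eq_two {α : Type*} [DecidableEq α] {s : Finset α} {x y : α}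
    (hs : s.card = 2) (hx : x ∈ s) (hy : y ∈ s) (hxy : x ≠ y) : s = {x, y} :=
  (Finset.eq_of_subset_of_card_le (Finset.insert_subset hx (by simpa using hy))
    (by rw [hs, Finset.card_pair hxy])).symm

/-- Quantifying over the endpoints of the two edges instead of over all vertices is what makes
crossing cheap to decide. -/
theorem crosses_iff {e f : Finset (ZMod 6)} :
    Crosses e f ↔ e.card = 2 ∧ f.card = 2 ∧ Disjoint e f ∧
      ∃ a ∈ e, ∃ b ∈ e, ∃ c ∈ f, ∃ d ∈ f, a ≠ b ∧ c ≠ d ∧ Xor (InArc a b c) (InArc a b d) := by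
  constructor
  · rintro ⟨hdisj, a, b, c, d, hab, hcd, rfl, rfl, hx⟩
    exact ⟨Finset.card_pair hab, Finset.card_pair hcd, hdisj,
      a, by simp, b, by simp, c, by simp, d, by simp, hab, hcd, hx⟩
  · rintro ⟨he, hf, hdisj, a, ha, b, hb, c, hc, d, hd, hab, hcd, hx⟩
    exact ⟨hdisj, a, b, c, d, hab, hcd, Finset.eq_pair_of_card_eq_two he ha hb hab,
      Finset.eq_pair_of_card_eq_two hf hc hd hcd, hx⟩

instance : DecidablePred InteriorEdge := fun _ => by unfold InteriorEdge cycLen; infer_instance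

instance (a b x : ZMod 6) : Decidable (InArc a b x) := by unfold InArc; infer_instance

instance : DecidableRel Crosses := fun _ _ => decidable_of_iff _ crosses_iff.symm

def interiorEdges : Finset (Finset (ZMod 6)) :=
  {{0, 2}, {1, 3}, {2, 4}, {3, 5}, {4, 0}, {5, 1}, {0, 3}, {1, 4}, {2, 5}}

theorem mem_interiorEdges {e : Finset (ZMod 6)} : e ∈ interiorEdges ↔ InteriorEdge e := by
  revert e
  decide

set_option synthInstance.maxSize 100000 in
theorem eq_of_crosses_of_noncrossing :
    ∀ a ∈ interiorEdges, ∀ b ∈ interiorEdges, ∀ c ∈ interiorEdges,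
      a ≠ b → a ≠ c → b ≠ c → ¬Crosses a b → ¬Crosses a c → ¬Crosses b c →
      ∀ f ∈ interiorEdges, ∀ g ∈ interiorEdges,
        Crosses f a → Crosses f b → Crosses f c → Crosses g a → Crosses g b → Crosses g c →
        f = g := by
  decide +kernel

/-- For every three-element set `S` of pairwise noncrossing interior edges of `K₆`,
there is at most one interior edge of `K₆` crossing all three edges of `S`. -/
theorem stmt_12 (S : Finset (Finset (ZMod 6)))
    (hcard : S.card = 3)
    (hint : ∀ e ∈ S, InteriorEdge e)
    (hnc : ∀ e ∈ S, ∀ f ∈ S, e ≠ f → ¬ Crosses e f) :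
    ∀ f g : Finset (ZMod 6), InteriorEdge f → InteriorEdge g →
      (∀ e ∈ S, Crosses f e) → (∀ e ∈ S, Crosses g e) → f = g := by
  obtain ⟨a, b, c, hab, hac, hbc, rfl⟩ := Finset.card_eq_three.mp hcard
  have ha : a ∈ ({a, b, c} : Finset _) := by simp
  have hb : b ∈ ({a, b, c} : Finset _) := by simp
  have hc : c ∈ ({a, b, c} : Finset _) := by simp
  have hS {e} (he : e ∈ ({a, b, c} : Finset _)) : e ∈ interiorEdges :=
    mem_interiorEdges.2 (hint e he)
  intro f g hf hg hfS hgS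
  exact eq_of_crosses_of_noncrossing a (hS ha) b (hS hb) c (hS hc) hab hac hbc
    (hnc a ha b hb hab) (hnc a ha c hc hac) (hnc b hb c hc hbc)
    f (mem_interiorEdges.2 hf) g (mem_interiorEdges.2 hg)
    (hfS a ha) (hfS b hb) (hfS c hc) (hgS a ha) (hgS b hb) (hgS c hc)
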